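/- arXiv:1510.02224 — 9 statements merged into one kernel-verified Lean document; each statement's English description precedes it below -/
import Mathlib

section
/- If x₁ and x₂ are solutions of x' = A(t)x on I and q₁, q₂ ∈ ℍ are quaternion constants, then the function t ↦ x₁(t)q₁ + x₂(t)q₂, where each scalar multiplies every component on the right, is also a solution of x' = A(t)x on I. -/
open Matrix MulOpposite

-- `op q • v` is the componentwise right product `fun i => v i * q`; it commutes with `M *ᵥ ·`
-- because `M` acts on the left.
theorem hasDerivAt_op_smul_add_op_smul_of_mulVec {𝔸 ι : Type*} [NormedRing 𝔸]
    [NormedAlgebra ℝ 𝔸] [Fintype ι] (M : Matrix ι ι 𝔸) {x₁ x₂ : ℝ → ι → 𝔸} {t : ℝ}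
    (h₁ : HasDerivAt x₁ (M *ᵥ x₁ t) t) (h₂ : HasDerivAt x₂ (M *ᵥ x₂ t) t) (q₁ q₂ : 𝔸) :
    HasDerivAt (fun s => op q₁ • x₁ s + op q₂ • x₂ s) (M *ᵥ (op q₁ • x₁ t + op q₂ • x₂ t)) t := by
  rw [mulVec_add, mulVec_smul, mulVec_smul]
  exact (h₁.const_smul (op q₁)).add (h₂.const_smul (op q₂))

/-- Superposition principle: right quaternionic linear combinations of solutions of
`x' = A(t) x` are again solutions. -/
theorem qde_superposition (A : ℝ → Matrix (Fin 2) (Fin 2) (Quaternion ℝ)) (I : Set ℝ)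
    (x₁ x₂ : ℝ → Fin 2 → Quaternion ℝ)
    (hx₁ : ∀ t ∈ I, HasDerivAt x₁ ((A t).mulVec (x₁ t)) t)
    (hx₂ : ∀ t ∈ I, HasDerivAt x₂ ((A t).mulVec (x₂ t)) t)
    (q₁ q₂ : Quaternion ℝ) :
    ∀ t ∈ I, HasDerivAt (fun s => fun i => x₁ s i * q₁ + x₂ s i * q₂)
      ((A t).mulVec (fun i => x₁ t i * q₁ + x₂ t i * q₂)) t := fun t ht =>
  hasDerivAt_op_smul_add_op_smul_of_mulVec (A t) (hx₁ t ht) (hx₂ t ht) q₁ q₂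
end

section
/- Let I = [a,b], let A : ℝ → M₂(ℍ) be continuous on I, let t₀ ∈ I, and let x₁, x₂ be solutions of x' = A(t)x on I such that the 2×2 quaternion matrix whose columns are x₁(t₀) and x₂(t₀) is invertible. Then for every solution x of x' = A(t)x on I there exist quaternion constants q₁, q₂ ∈ ℍ such that x(t) = x₁(t)q₁ + x₂(t)q₂ for all t ∈ I. -/
/-!
Since `A(t)` acts on the left, right multiplication by a constant quaternion commutes with it, so
right linear combinations of solutions are again solutions. Invertibility of the matrix of initial
values lets us match `x(t₀)` by such a combination, and two solutions with the same value at `t₀`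
coincide on `[a, b]` by the Grönwall uniqueness theorem: continuity of `A` on the compact interval
makes `z ↦ A(t) z` Lipschitz uniformly in `t`.
-/

open Set Matrix

section Bound

variable {R : Type*} [NormedRing R] {m n : Type*} [Fintype m] [Fintype n]

attribute [local instance] Matrix.normedAddCommGroup

theorem Matrix.norm_mulVec_le_card_mul (A : Matrix m n R) (v : n → R) :
    ‖A *ᵥ v‖ ≤ Fintype.card n * ‖A‖ * ‖v‖ := by
  refine (pi_norm_le_iff_of_nonneg (by positivity)).2 fun i => ?_
  calc ‖∑ j, A i j * v j‖ ≤ ∑ _j : n, ‖A‖ * ‖v‖ :=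
        norm_sum_le_of_le _ fun j _ => norm_mul_le_of_le A.norm_entry_le_entrywise_sup_norm
          (norm_le_pi_norm v j)
    _ = Fintype.card n * ‖A‖ * ‖v‖ := by simp [mul_assoc]

theorem exists_lipschitzWith_mulVec_of_continuousOn {α : Type*} [TopologicalSpace α]
    {A : α → Matrix m n R} {s : Set α} (hs : IsCompact s) (hA : ContinuousOn A s) :
    ∃ K, ∀ t ∈ s, LipschitzWith K (A t).mulVec := by
  obtain ⟨C, hC⟩ := hs.exists_bound_of_continuousOn hA
  refine ⟨(Fintype.card n * C).toNNReal, fun t ht => LipschitzWith.of_dist_le_mul fun v w => ?_⟩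
  rw [dist_eq_norm, dist_eq_norm, ← mulVec_sub]
  calc ‖A t *ᵥ (v - w)‖ ≤ Fintype.card n * ‖A t‖ * ‖v - w‖ := norm_mulVec_le_card_mul (A t) _
    _ ≤ (Fintype.card n * C).toNNReal * ‖v - w‖ := by
      gcongr
      exact (mul_le_mul_of_nonneg_left (hC t ht) (by positivity)).trans (Real.le_coe_toNNReal _)

end Bound

theorem ODE_solution_unique_of_mem_Icc_of_hasDerivAt {E : Type*} [NormedAddCommGroup E]
    [NormedSpace ℝ E] {v : ℝ → E → E} {K : NNReal} {f g : ℝ → E} {a b t₀ : ℝ}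
    (hv : ∀ t ∈ Icc a b, LipschitzWith K (v t)) (ht₀ : t₀ ∈ Icc a b)
    (hf : ∀ t ∈ Icc a b, HasDerivAt f (v t (f t)) t)
    (hg : ∀ t ∈ Icc a b, HasDerivAt g (v t (g t)) t) (heq : f t₀ = g t₀) :
    EqOn f g (Icc a b) := by
  have hfc : ContinuousOn f (Icc a b) := HasDerivAt.continuousOn hf
  have hgc : ContinuousOn g (Icc a b) := HasDerivAt.continuousOn hg
  rw [← Icc_union_Icc_eq_Icc ht₀.1 ht₀.2]
  refine EqOn.union ?_ ?_
  · have hsub : Icc a t₀ ⊆ Icc a b := Icc_subset_Icc_right ht₀.2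
    exact ODE_solution_unique_of_mem_Icc_left (s := fun _ => univ)
      (fun t ht => (hv t (hsub (Ioc_subset_Icc_self ht))).lipschitzOnWith)
      (hfc.mono hsub) (fun t ht => (hf t (hsub (Ioc_subset_Icc_self ht))).hasDerivWithinAt)
      (fun _ _ => trivial)
      (hgc.mono hsub) (fun t ht => (hg t (hsub (Ioc_subset_Icc_self ht))).hasDerivWithinAt)
      (fun _ _ => trivial) heq
  · have hsub : Icc t₀ b ⊆ Icc a b := Icc_subset_Icc_left ht₀.1
    exact ODE_solution_unique_of_mem_Icc_right (s := fun _ => univ)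
      (fun t ht => (hv t (hsub (Ico_subset_Icc_self ht))).lipschitzOnWith)
      (hfc.mono hsub) (fun t ht => (hf t (hsub (Ico_subset_Icc_self ht))).hasDerivWithinAt)
      (fun _ _ => trivial)
      (hgc.mono hsub) (fun t ht => (hg t (hsub (Ico_subset_Icc_self ht))).hasDerivWithinAt)
      (fun _ _ => trivial) heq

variable {R : Type*} [NormedRing R] [NormedAlgebra ℝ R] {n : Type*} [Fintype n]

def IsLinearODESolution (A : ℝ → Matrix n n R) (s : Set ℝ) (x : ℝ → n → R) : Prop :=
  ∀ t ∈ s, HasDerivAt x (A t *ᵥ x t) t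

namespace IsLinearODESolution

variable {A : ℝ → Matrix n n R} {s : Set ℝ} {x y : ℝ → n → R}

theorem add (hx : IsLinearODESolution A s x) (hy : IsLinearODESolution A s y) :
    IsLinearODESolution A s (x + y) := fun t ht => by
  simpa only [Pi.add_apply, mulVec_add] using (hx t ht).add (hy t ht)

theorem op_smul (hx : IsLinearODESolution A s x) (q : R) :
    IsLinearODESolution A s fun t => MulOpposite.op q • x t := fun t ht => by
  rw [mulVec_smul]
  exact (hx t ht).const_smul (MulOpposite.op q)

theorem eqOn_Icc {a b t₀ : ℝ} (hA : ContinuousOn A (Icc a b)) (ht₀ : t₀ ∈ Icc a b)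
    (hx : IsLinearODESolution A (Icc a b) x) (hy : IsLinearODESolution A (Icc a b) y)
    (heq : x t₀ = y t₀) : EqOn x y (Icc a b) := by
  obtain ⟨K, hK⟩ := exists_lipschitzWith_mulVec_of_continuousOn isCompact_Icc hA
  exact ODE_solution_unique_of_mem_Icc_of_hasDerivAt hK ht₀ hx hy heq

end IsLinearODESolution

/-- Structure of the general solution: if `x₁, x₂` are solutions of `x' = A(t) x` on
`I = [a,b]` whose initial values at `t₀` form an invertible quaternion matrix, then every
solution is a right quaternionic linear combination of `x₁` and `x₂`. -/
theorem qde_general_solution (a b : ℝ)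
    (A : ℝ → Matrix (Fin 2) (Fin 2) (Quaternion ℝ))
    (hA : ContinuousOn A (Set.Icc a b))
    (t₀ : ℝ) (ht₀ : t₀ ∈ Set.Icc a b)
    (x₁ x₂ : ℝ → Fin 2 → Quaternion ℝ)
    (hx₁ : ∀ t ∈ Set.Icc a b, HasDerivAt x₁ ((A t).mulVec (x₁ t)) t)
    (hx₂ : ∀ t ∈ Set.Icc a b, HasDerivAt x₂ ((A t).mulVec (x₂ t)) t)
    (hM : IsUnit (Matrix.of fun i j => ![x₁ t₀, x₂ t₀] j i)) :
    ∀ x : ℝ → Fin 2 → Quaternion ℝ,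
      (∀ t ∈ Set.Icc a b, HasDerivAt x ((A t).mulVec (x t)) t) →
      ∃ q₁ q₂ : Quaternion ℝ, ∀ t ∈ Set.Icc a b,
        x t = fun i => x₁ t i * q₁ + x₂ t i * q₂ := by
  intro x hx
  obtain ⟨q, hq⟩ := mulVec_surjective_iff_exists_right_inverse.2
    ((isUnit_iff_exists.1 hM).imp fun _ h => h.1) (x t₀)
  have hinit : x t₀ = MulOpposite.op (q 0) • x₁ t₀ + MulOpposite.op (q 1) • x₂ t₀ := by
    rw [← hq, mulVec_eq_sum, Fin.sum_univ_two]
    rfl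
  have hy : IsLinearODESolution A (Icc a b)
      fun t => MulOpposite.op (q 0) • x₁ t + MulOpposite.op (q 1) • x₂ t :=
    (IsLinearODESolution.op_smul hx₁ _).add (IsLinearODESolution.op_smul hx₂ _)
  exact ⟨q 0, q 1, fun t ht => IsLinearODESolution.eqOn_Icc hA ht₀ hx hy hinit ht⟩
end

section
/- For every 2×2 quaternion matrix M, the quaternion ddet M := N₀₀N₁₁ − N₀₁N₁₀, where N = MM⁺ and M⁺ is the conjugate transpose of M, is a real number: its imaginary part vanishes (equivalently, ddet M equals its own quaternion conjugate). -/
open Matrix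

/-- The double determinant of a 2×2 quaternion matrix. -/
noncomputable def ddet (M : Matrix (Fin 2) (Fin 2) (Quaternion ℝ)) : Quaternion ℝ :=
  (M * Mᴴ) 0 0 * (M * Mᴴ) 1 1 - (M * Mᴴ) 0 1 * (M * Mᴴ) 1 0

/-- The double determinant `ddet M` of a 2×2 quaternion matrix is a real number:
its imaginary part vanishes, equivalently it equals its own quaternion conjugate. -/
theorem ddet_is_real (M : Matrix (Fin 2) (Fin 2) (Quaternion ℝ)) :
    (ddet M).im = 0 ∧ star (ddet M) = ddet M := by
  have h00 : (M * Mᴴ) 0 0 =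
      ((Quaternion.normSq (M 0 0) + Quaternion.normSq (M 0 1) : ℝ) : Quaternion ℝ) := by
    simp [Matrix.mul_apply, Fin.sum_univ_two, Matrix.conjTranspose_apply,
      Quaternion.self_mul_star]
  have h11 : (M * Mᴴ) 1 1 =
      ((Quaternion.normSq (M 1 0) + Quaternion.normSq (M 1 1) : ℝ) : Quaternion ℝ) := by
    simp [Matrix.mul_apply, Fin.sum_univ_two, Matrix.conjTranspose_apply,
      Quaternion.self_mul_star]
  have h10 : (M * Mᴴ) 1 0 = star ((M * Mᴴ) 0 1) := by
    simp [Matrix.mul_apply, Fin.sum_univ_two, Matrix.conjTranspose_apply, StarMul.star_mul]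
  have hstar : star (ddet M) = ddet M := by
    unfold ddet
    rw [h00, h11, h10]
    simp [star_sub, StarMul.star_mul, star_star, Quaternion.star_coe]
    norm_cast
    ring
  refine ⟨?_, hstar⟩
  rw [Quaternion.star_eq_self] at hstar
  rw [hstar]
  simp
end

section
/- Let x₁, x₂ : ℝ → ℍ² be right linearly dependent on a set I, i.e. there exist quaternions q₁, q₂, not both zero, with x₁(t)q₁ + x₂(t)q₂ = 0 for all t ∈ I. Then the Wronskian W(t) = ddet M(t) vanishes for every t ∈ I, where M(t) is the 2×2 quaternion matrix whose columns are x₁(t) and x₂(t). -/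
open Matrix

lemma quat_aux (b d r : Quaternion ℝ) :
    (b * r * (star r * star b) + b * star b) * (d * r * (star r * star d) + d * star d)
      - (b * r * (star r * star d) + b * star d) * (d * r * (star r * star b) + d * star b)
      = 0 := by
  have key : ∀ x y : Quaternion ℝ,
      x * r * (star r * star y) = Quaternion.normSq r • (x * star y) := by
    intro x y
    rw [mul_assoc, ← mul_assoc r, Quaternion.self_mul_star, ← mul_assoc,
      Quaternion.mul_coe_eq_smul, smul_mul_assoc]
  have e : ∀ x : Quaternion ℝ, Quaternion.normSq r • x + x = (Quaternion.normSq r + 1) • x := by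
    intro x; rw [add_smul, one_smul]
  have hbd : (b * star d) * (d * star b) = Quaternion.normSq d • (b * star b) := by
    rw [mul_assoc, ← mul_assoc (star d), Quaternion.star_mul_self, Quaternion.coe_mul_eq_smul,
      mul_smul_comm]
  have hbd' : (b * star b) * (d * star d) = Quaternion.normSq d • (b * star b) := by
    rw [Quaternion.self_mul_star d, Quaternion.mul_coe_eq_smul]
  rw [key b b, key d d, key b d, key d b, e, e, e, e, smul_mul_smul_comm, smul_mul_smul_comm,
    ← smul_sub, hbd, hbd', sub_self, smul_zero]

lemma quat_aux' (b d r : Quaternion ℝ) :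
    (b * star b + b * r * (star r * star b)) * (d * star d + d * r * (star r * star d))
      - (b * star d + b * r * (star r * star d)) * (d * star b + d * r * (star r * star b))
      = 0 := by
  have h := quat_aux b d r
  rw [add_comm (b * r * (star r * star b)), add_comm (d * r * (star r * star d)),
    add_comm (b * r * (star r * star d)), add_comm (d * r * (star r * star b))] at h
  exact h

/-- If `x₁, x₂ : ℝ → ℍ²` are right linearly dependent on `I`, then the Wronskian
`W(t) = ddet M(t)` vanishes on `I`, where `M(t)` has columns `x₁(t)` and `x₂(t)`. -/
theorem wronskian_eq_zero_of_right_dep (I : Set ℝ) (x₁ x₂ : ℝ → Fin 2 → Quaternion ℝ)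
    (hdep : ∃ q₁ q₂ : Quaternion ℝ, ¬(q₁ = 0 ∧ q₂ = 0) ∧
      ∀ t ∈ I, (fun i => x₁ t i * q₁ + x₂ t i * q₂) = (0 : Fin 2 → Quaternion ℝ)) :
    ∀ t ∈ I, ddet (Matrix.of fun i j => ![x₁ t, x₂ t] j i) = 0 := by
  obtain ⟨q₁, q₂, hne, hI⟩ := hdep
  intro t ht
  have h0 := congrFun (hI t ht) 0
  have h1 := congrFun (hI t ht) 1
  simp only [Pi.zero_apply] at h0 h1
  simp only [ddet, Matrix.mul_apply, Fin.sum_univ_two, Matrix.conjTranspose_apply,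
    Matrix.of_apply, Matrix.cons_val_zero, Matrix.cons_val_one, Matrix.head_cons]
  rcases eq_or_ne q₁ 0 with hq1 | hq1
  · -- then q₂ ≠ 0; second column expressed via first
    have hq2 : q₂ ≠ 0 := fun h => hne ⟨hq1, h⟩
    set s : Quaternion ℝ := -(q₁ * q₂⁻¹) with hs
    have hexp : ∀ u v : Quaternion ℝ, u * q₁ + v * q₂ = 0 → v = u * s := by
      intro u v huv
      have h' : v * q₂ = -(u * q₁) := eq_neg_of_add_eq_zero_right huv
      calc v = v * q₂ * q₂⁻¹ := by rw [mul_assoc, mul_inv_cancel₀ hq2, mul_one]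
        _ = u * s := by rw [h', hs]; simp [mul_assoc]
    have hb := hexp _ _ h0
    have hd := hexp _ _ h1
    rw [hb, hd]
    simp only [StarMul.star_mul]
    exact quat_aux' (x₁ t 0) (x₁ t 1) s
  · -- q₁ ≠ 0; first column expressed via second
    set r : Quaternion ℝ := -(q₂ * q₁⁻¹) with hr
    have hexp : ∀ u v : Quaternion ℝ, u * q₁ + v * q₂ = 0 → u = v * r := by
      intro u v huv
      have h' : u * q₁ = -(v * q₂) := eq_neg_of_add_eq_zero_left huv
      calc u = u * q₁ * q₁⁻¹ := by rw [mul_assoc, mul_inv_cancel₀ hq1, mul_one]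
        _ = v * r := by rw [h', hr]; simp [mul_assoc]
    have ha := hexp _ _ h0
    have hc := hexp _ _ h1
    rw [ha, hc]
    simp only [StarMul.star_mul]
    exact quat_aux (x₂ t 0) (x₂ t 1) r
end

section
/- Liouville's formula for QDEs: let I = [a,b], let A : ℝ → M₂(ℍ) be continuous on I with entries a_{ij}(t), let x₁, x₂ be solutions of x' = A(t)x on I, let M(t) be the 2×2 matrix with columns x₁(t), x₂(t), and let W(t) = ddet M(t). Then for every t₀, t ∈ I, W(t) = exp(∫_{t₀}^{t} 2·Re(a₁₁(s) + a₂₂(s)) ds) · W(t₀), where the exponential is the real exponential and 2·Re(tr A(s)) = tr A(s) + tr A⁺(s). In particular, if W(t₀) = 0 for some t₀ ∈ I then W(t) = 0 for all t ∈ I. -/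
/-!
The Gram matrix `N = M Mᴴ` of the solution matrix satisfies `N' = A N + N Aᴴ`, and `ddet M` is
the row determinant `N₀₀ N₁₁ - N₀₁ N₁₀` of `N`. Since `N` is Hermitian its diagonal entries are
real, hence central in `ℍ`, and the product rule collapses to the scalar equation
`W' = 2 Re(tr A) W`. An integrating factor then gives the exponential formula.
-/

open Matrix

open Set

section RowDeterminant

variable {R : Type*} [Ring R]

/-- Chen's row determinant of a 2×2 matrix over a noncommutative ring. -/
def Matrix.rdet (N : Matrix (Fin 2) (Fin 2) R) : R :=
  N 0 0 * N 1 1 - N 0 1 * N 1 0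

def Matrix.rdetDeriv (N N' : Matrix (Fin 2) (Fin 2) R) : R :=
  N' 0 0 * N 1 1 + N 0 0 * N' 1 1 - (N' 0 1 * N 1 0 + N 0 1 * N' 1 0)

end RowDeterminant

section MatrixCalculus

variable {R : Type*} [NormedRing R] [NormedAlgebra ℝ R] {m n : Type*} {t : ℝ}

theorem hasDerivAt_of_mulVec_cols [Fintype m] {x : n → ℝ → m → R} {A : Matrix m m R}
    (hx : ∀ j, HasDerivAt (x j) (A *ᵥ x j t) t) (i : m) (j : n) :
    HasDerivAt (fun s => Matrix.of (fun i j => x j s i) i j)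
      ((A * Matrix.of fun i j => x j t i) i j) t :=
  hasDerivAt_pi.1 (hx j) i

theorem hasDerivAt_mul_conjTranspose_apply [StarRing R] [StarModule ℝ R] [ContinuousStar R]
    [Fintype n] {M : ℝ → Matrix m n R} {M' : Matrix m n R}
    (hM : ∀ i j, HasDerivAt (fun s => M s i j) (M' i j) t) (i k : m) :
    HasDerivAt (fun s => (M s * (M s)ᴴ) i k) ((M' * (M t)ᴴ + M t * M'ᴴ) i k) t := by
  simp only [Matrix.add_apply, mul_apply, conjTranspose_apply, ← Finset.sum_add_distrib]
  exact HasDerivAt.fun_sum fun j _ => (hM i j).fun_mul (hM k j).star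

theorem hasDerivAt_rdet {N : ℝ → Matrix (Fin 2) (Fin 2) R} {N' : Matrix (Fin 2) (Fin 2) R}
    (hN : ∀ i j, HasDerivAt (fun s => N s i j) (N' i j) t) :
    HasDerivAt (fun s => (N s).rdet) ((N t).rdetDeriv N') t :=
  ((hN 0 0).fun_mul (hN 1 1)).fun_sub ((hN 0 1).fun_mul (hN 1 0))

end MatrixCalculus

section IntegratingFactor

variable {E : Type*} [NormedAddCommGroup E] [NormedSpace ℝ E] {f : ℝ → ℝ} {W : ℝ → E}
  {a b t₀ : ℝ}

theorem Continuous.eq_exp_integral_smul_of_hasDerivAt (hf : Continuous f)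
    (hW : ∀ t ∈ Icc a b, HasDerivAt W (f t • W t) t) (ht₀ : t₀ ∈ Icc a b) :
    ∀ t ∈ Icc a b, W t = Real.exp (∫ s in t₀..t, f s) • W t₀ := by
  set g : ℝ → ℝ := fun u => ∫ s in t₀..u, f s
  have hg : ∀ u, HasDerivAt g (f u) u := fun u =>
    (hf.integral_hasStrictDerivAt t₀ u).hasDerivAt
  set F : ℝ → E := fun u => Real.exp (-g u) • W u
  have hF : ∀ u ∈ Icc a b, HasDerivAt F 0 u := fun u hu => by
    refine ((hg u).neg.exp.smul (hW u hu)).congr_deriv ?_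
    rw [smul_smul, ← add_smul, mul_neg, add_neg_cancel, zero_smul]
  have hF_const : ∀ u ∈ Icc a b, F u = F a :=
    constant_of_has_deriv_right_zero (fun u hu => (hF u hu).continuousAt.continuousWithinAt)
      fun u hu => (hF u (Ico_subset_Icc_self hu)).hasDerivWithinAt
  intro t ht
  have hFt : Real.exp (-g t) • W t = W t₀ := by
    simpa [F, g] using (hF_const t ht).trans (hF_const t₀ ht₀).symm
  rw [← hFt, smul_smul, ← Real.exp_add, add_neg_cancel, Real.exp_zero, one_smul]

theorem ContinuousOn.eq_exp_integral_smul_of_hasDerivAt (hf : ContinuousOn f (Icc a b))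
    (hW : ∀ t ∈ Icc a b, HasDerivAt W (f t • W t) t) (ht₀ : t₀ ∈ Icc a b) :
    ∀ t ∈ Icc a b, W t = Real.exp (∫ s in t₀..t, f s) • W t₀ := by
  have hab : a ≤ b := ht₀.1.trans ht₀.2
  set g := IccExtend hab ((Icc a b).domRestrict f)
  have hgf : ∀ s ∈ Icc a b, g s = f s := fun s hs => IccExtend_of_mem hab _ hs
  intro t ht
  rw [intervalIntegral.integral_congr fun s hs => (hgf s (uIcc_subset_Icc ht₀ ht hs)).symm]
  exact Continuous.eq_exp_integral_smul_of_hasDerivAt (f := g) hf.domRestrict.Icc_extend'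
    (fun u hu => by rw [hgf u hu]; exact hW u hu) ht₀ t ht

end IntegratingFactor

namespace Quaternion

instance {R : Type*} [CommRing R] [Star R] [TrivialStar R] : StarModule R ℍ[R] :=
  ⟨fun r a => by rw [star_trivial r]; exact star_smul r a⟩

theorem rdetDeriv_mul_add_mul_conjTranspose (A N : Matrix (Fin 2) (Fin 2) ℍ[ℝ])
    (hN : N.IsHermitian) :
    N.rdetDeriv (A * N + N * Aᴴ) = (2 * A.trace.re) • N.rdet := by
  obtain ⟨p, hp⟩ : ∃ p : ℝ, N 0 0 = p := ⟨_, star_eq_self.1 (hN.apply 0 0)⟩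
  obtain ⟨q, hq⟩ : ∃ q : ℝ, N 1 1 = q := ⟨_, star_eq_self.1 (hN.apply 1 1)⟩
  have hu : N 1 0 = star (N 0 1) := (hN.apply 1 0).symm
  simp only [rdetDeriv, rdet, Matrix.add_apply, mul_apply, conjTranspose_apply, Fin.sum_univ_two,
    trace_fin_two, hp, hq, hu, ← coe_mul_eq_smul]
  generalize N 0 1 = u
  ext <;>
    simp only [re_mul, imI_mul, imJ_mul, imK_mul, re_add, imI_add, imJ_add, imK_add,
      re_sub, imI_sub, imJ_sub, imK_sub, re_star, imI_star, imJ_star, imK_star,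
      re_coe, imI_coe, imJ_coe, imK_coe] <;>
    ring

theorem hasDerivAt_ddet {M : ℝ → Matrix (Fin 2) (Fin 2) ℍ[ℝ]} {A : Matrix (Fin 2) (Fin 2) ℍ[ℝ]}
    {t : ℝ} (hM : ∀ i j, HasDerivAt (fun s => M s i j) ((A * M t) i j) t) :
    HasDerivAt (fun s => ddet (M s)) ((2 * A.trace.re) • ddet (M t)) t := by
  have hN := hasDerivAt_rdet (hasDerivAt_mul_conjTranspose_apply hM)
  rwa [conjTranspose_mul, Matrix.mul_assoc, ← Matrix.mul_assoc (M t),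
    rdetDeriv_mul_add_mul_conjTranspose _ _ (isHermitian_mul_conjTranspose_self _)] at hN

end Quaternion

/-- Liouville's formula for quaternionic differential equations:
`W(t) = exp (∫_{t₀}^t 2 Re(tr A(s)) ds) * W(t₀)`; in particular, if the Wronskian
vanishes at one point of `I = [a,b]` then it vanishes identically on `I`. -/
theorem qde_liouville (a b : ℝ)
    (A : ℝ → Matrix (Fin 2) (Fin 2) (Quaternion ℝ))
    (hA : ContinuousOn A (Set.Icc a b))
    (x₁ x₂ : ℝ → Fin 2 → Quaternion ℝ)
    (hx₁ : ∀ t ∈ Set.Icc a b, HasDerivAt x₁ ((A t).mulVec (x₁ t)) t)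
    (hx₂ : ∀ t ∈ Set.Icc a b, HasDerivAt x₂ ((A t).mulVec (x₂ t)) t)
    (W : ℝ → Quaternion ℝ)
    (hW : ∀ t, W t = ddet (Matrix.of fun i j => ![x₁ t, x₂ t] j i)) :
    (∀ t₀ ∈ Set.Icc a b, ∀ t ∈ Set.Icc a b,
      W t = ((Real.exp (∫ s in t₀..t, 2 * ((A s 0 0).re + (A s 1 1).re)) : ℝ) : Quaternion ℝ)
        * W t₀) ∧
    (∀ t₀ ∈ Set.Icc a b, W t₀ = 0 → ∀ t ∈ Set.Icc a b, W t = 0) := by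
  have hW' : ∀ t ∈ Icc a b, HasDerivAt W ((2 * (A t).trace.re) • W t) t := fun t ht => by
    have hcols : ∀ j, HasDerivAt (fun s => ![x₁ s, x₂ s] j) (A t *ᵥ ![x₁ t, x₂ t] j) t :=
      Fin.forall_fin_two.2 ⟨hx₁ t ht, hx₂ t ht⟩
    rw [funext hW]
    exact Quaternion.hasDerivAt_ddet (hasDerivAt_of_mulVec_cols hcols)
  have htr : ContinuousOn (fun s => 2 * (A s).trace.re) (Icc a b) :=
    continuousOn_const.mul
      ((Quaternion.continuous_re.comp continuous_id.matrix_trace).comp_continuousOn hA)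
  have hformula : ∀ t₀ ∈ Icc a b, ∀ t ∈ Icc a b, W t =
      ((Real.exp (∫ s in t₀..t, 2 * ((A s 0 0).re + (A s 1 1).re)) : ℝ) : Quaternion ℝ) * W t₀ :=
    fun t₀ ht₀ t ht => by
      simpa [Quaternion.coe_mul_eq_smul, trace_fin_two] using
        htr.eq_exp_integral_smul_of_hasDerivAt hW' ht₀ t ht
  exact ⟨hformula, fun t₀ ht₀ h0 t ht => by rw [hformula t₀ ht₀ t ht, h0, mul_zero]⟩
end

section
/- A 2×2 quaternion matrix M is invertible (is a unit in the ring M₂(ℍ)) if and only if ddet M ≠ 0, where ddet M := N₀₀N₁₁ − N₀₁N₁₀ with N = MM⁺ and M⁺ the conjugate transpose of M. -/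
open Matrix

/-!
Put `N = M Mᴴ`. Since `N` is Hermitian, its diagonal entries are real, hence central in `ℍ`,
and its off-diagonal entries are `q` and `q̄`, which commute. Under these commutation relations
the classical adjugate `!![N₁₁, -N₀₁; -N₁₀, N₀₀]` still satisfies `N * adj = ddet M • 1`, so
`N` is invertible exactly when `ddet M ≠ 0`. Finally `M` is invertible iff `N` is, because
matrix rings over a division ring are Dedekind-finite.
-/

namespace Matrix

section Quaternion

variable {R n : Type*} [CommRing R] {N : Matrix n n (Quaternion R)}

theorem IsHermitian.commute_apply_self [NoZeroDivisors R] [CharZero R] (hN : N.IsHermitian)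
    (i : n) (x : Quaternion R) : Commute (N i i) x := by
  rw [Quaternion.star_eq_self.mp (hN.apply i i)]
  exact Quaternion.coe_commutes _ x

theorem IsHermitian.commute_apply_apply_symm (hN : N.IsHermitian) (i j : n) :
    Commute (N i j) (N j i) := by
  rw [← hN.apply j i]
  exact (star_comm_self' (N i j)).symm

end Quaternion

section FinTwo

variable {R : Type*} [Ring R] {N : Matrix (Fin 2) (Fin 2) R}

theorem mul_adjugate_fin_two_of_commute (h00 : Commute (N 0 0) (N 0 1))
    (h11 : Commute (N 1 1) (N 1 0)) (hdiag : Commute (N 0 0) (N 1 1))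
    (hoff : Commute (N 0 1) (N 1 0)) :
    N * !![N 1 1, -N 0 1; -N 1 0, N 0 0] =
      diagonal fun _ => N 0 0 * N 1 1 - N 0 1 * N 1 0 := by
  ext i j
  fin_cases i <;> fin_cases j <;>
    simp [mul_apply, Fin.sum_univ_two, h00.eq, h11.eq, hdiag.eq, hoff.eq, sub_eq_add_neg,
      add_comm]

theorem isUnit_iff_of_commute {D : Type*} [DivisionRing D] {N : Matrix (Fin 2) (Fin 2) D}
    (h00 : Commute (N 0 0) (N 0 1)) (h11 : Commute (N 1 1) (N 1 0))
    (hdiag : Commute (N 0 0) (N 1 1)) (hoff : Commute (N 0 1) (N 1 0)) :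
    IsUnit N ↔ N 0 0 * N 1 1 - N 0 1 * N 1 0 ≠ 0 := by
  have hadj := mul_adjugate_fin_two_of_commute h00 h11 hdiag hoff
  constructor
  · intro hN hd
    have hzero : !![N 1 1, -N 0 1; -N 1 0, N 0 0] = 0 :=
      hN.mul_left_cancel (by rw [hadj, hd, mul_zero, diagonal_zero])
    simp only [← ext_iff, Fin.forall_fin_two] at hzero
    refine hN.ne_zero (ext fun i j => ?_)
    fin_cases i <;> fin_cases j <;> simp_all
  · intro hd
    refine IsUnit.of_mul_eq_one (!![N 1 1, -N 0 1; -N 1 0, N 0 0] *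
      diagonal fun _ => (N 0 0 * N 1 1 - N 0 1 * N 1 0)⁻¹) ?_
    rw [← mul_assoc, hadj, diagonal_mul_diagonal, mul_inv_cancel₀ hd, diagonal_one]

end FinTwo

theorem isUnit_iff_isUnit_mul_conjTranspose_self {D n : Type*} [DivisionRing D] [StarRing D]
    [Fintype n] [DecidableEq n] {M : Matrix n n D} : IsUnit M ↔ IsUnit (M * Mᴴ) :=
  ⟨fun hM => hM.mul (isUnit_conjTranspose M |>.mpr hM), isUnit_of_mul_isUnit_left⟩

end Matrix

/-- A 2×2 quaternion matrix is invertible if and only if its double determinant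
is nonzero. -/
theorem isUnit_iff_ddet_ne_zero (M : Matrix (Fin 2) (Fin 2) (Quaternion ℝ)) :
    IsUnit M ↔ ddet M ≠ 0 := by
  have hN : (M * Mᴴ).IsHermitian := isHermitian_mul_conjTranspose_self M
  rw [isUnit_iff_isUnit_mul_conjTranspose_self, ddet]
  exact isUnit_iff_of_commute (hN.commute_apply_self 0 _) (hN.commute_apply_self 1 _)
    (hN.commute_apply_self 0 _) (hN.commute_apply_apply_symm 0 1)
end

section
/- Let I = [a,b], let A : ℝ → M₂(ℍ) be continuous on I, let t₀ ∈ I, and let M : ℝ → M₂(ℍ) be a fundamental matrix on I, i.e. M is differentiable with M'(t) = A(t)M(t) and M(t) is invertible for every t ∈ I. Then every solution x of x' = A(t)x on I satisfies x(t) = M(t)⬝(M(t₀)⁻¹⬝x(t₀)) for all t ∈ I; in particular, every solution has the form x(t) = M(t)⬝q for a constant vector q ∈ ℍ². -/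
/-!
Along any solution `x`, the vector `M(s)⁻¹ x(s)` has derivative
`-M⁻¹ M' M⁻¹ x + M⁻¹ x' = -M⁻¹ A x + M⁻¹ A x = 0`, so it is constant on `[a, b]`;
multiplying its value at `t₀` by `M(t)` recovers `x(t)`.
-/

open Matrix

section Calculus

variable {𝕜 : Type*} [NontriviallyNormedField 𝕜]

theorem HasDerivAt.ringInverse {R : Type*} [NormedRing R] [HasSummableGeomSeries R]
    [NormedAlgebra 𝕜 R] {M : 𝕜 → R} {M' : R} {t : 𝕜} (hM : HasDerivAt M M' t)
    (hunit : IsUnit (M t)) :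
    HasDerivAt (fun s => Ring.inverse (M s))
      (-(Ring.inverse (M t) * M' * Ring.inverse (M t))) t := by
  obtain ⟨u, hu⟩ := hunit
  have h := hasFDerivAt_ringInverse (𝕜 := 𝕜) u
  rw [hu] at h
  simpa [← hu] using! h.comp_hasDerivAt t hM

theorem hasDerivAt_matrix_iff {m n α : Type*} [Fintype m] [Fintype n] [NormedAddCommGroup α]
    [NormedSpace 𝕜 α] {N : 𝕜 → Matrix m n α} {N' : Matrix m n α} {t : 𝕜} :
    HasDerivAt N N' t ↔ ∀ i j, HasDerivAt (fun s => N s i j) (N' i j) t :=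
  hasDerivAt_pi.trans (forall_congr' fun _ => hasDerivAt_pi)

theorem HasDerivAt.mulVec {m n α : Type*} [Fintype m] [Fintype n] [NormedRing α]
    [NormedAlgebra 𝕜 α] {N : 𝕜 → Matrix m n α} {N' : Matrix m n α} {y : 𝕜 → n → α}
    {y' : n → α} {t : 𝕜} (hN : HasDerivAt N N' t) (hy : HasDerivAt y y' t) :
    HasDerivAt (fun s => N s *ᵥ y s) (N' *ᵥ y t + N t *ᵥ y') t := by
  rw [hasDerivAt_matrix_iff] at hN
  rw [hasDerivAt_pi] at hy ⊢
  intro i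
  simp only [mulVec_apply_eq_sum, Pi.add_apply, ← Finset.sum_add_distrib]
  exact HasDerivAt.fun_sum fun j _ => (hN i j).fun_mul (hy j)

theorem hasDerivAt_inverse_mulVec_eq_zero {n α : Type*} [Fintype n] [DecidableEq n]
    [NormedRing α] [NormedAlgebra 𝕜 α] [CompleteSpace α] {A : Matrix n n α}
    {M : 𝕜 → Matrix n n α} {x : 𝕜 → n → α} {t : 𝕜} (hM : HasDerivAt M (A * M t) t)
    (hx : HasDerivAt x (A *ᵥ x t) t) (hunit : IsUnit (M t)) :
    HasDerivAt (fun s => Ring.inverse (M s) *ᵥ x s) 0 t := by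
  -- `HasDerivAt` only sees the topology, so any algebra norm inducing the product topology
  -- serves; its uniformity agrees with `Matrix.instUniformSpace` only up to unfolding.
  let := @Matrix.linftyOpNormedRing n α _ _ _
  let := @Matrix.linftyOpNormedAlgebra 𝕜 n α _ _ _ _ _
  have : HasSummableGeomSeries (Matrix n n α) :=
    @instHasSummableGeomSeriesOfCompleteSpace _ _ (Matrix.instCompleteSpace n n α)
  have h := (hM.ringInverse hunit).mulVec hx
  rwa [neg_mulVec, mulVec_mulVec, mul_assoc, mul_assoc, Ring.mul_inverse_cancel _ hunit,
    mul_one, ← mulVec_mulVec, neg_add_cancel] at h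

end Calculus

theorem eq_of_hasDerivAt_zero_of_mem_Icc {E : Type*} [NormedAddCommGroup E] [NormedSpace ℝ E]
    {f : ℝ → E} {a b : ℝ} (hf : ∀ t ∈ Set.Icc a b, HasDerivAt f 0 t) {s t : ℝ}
    (hs : s ∈ Set.Icc a b) (ht : t ∈ Set.Icc a b) : f s = f t := by
  have hconst := constant_of_has_deriv_right_zero
    (fun t ht => (hf t ht).continuousAt.continuousWithinAt)
    (fun t ht => (hf t (Set.Ico_subset_Icc_self ht)).hasDerivWithinAt)
  rw [hconst s hs, hconst t ht]

theorem solution_eq_fundamentalMatrix_mulVec_general (a b : ℝ)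
    (A : ℝ → Matrix (Fin 2) (Fin 2) (Quaternion ℝ))
    (t₀ : ℝ) (ht₀ : t₀ ∈ Set.Icc a b)
    (M : ℝ → Matrix (Fin 2) (Fin 2) (Quaternion ℝ))
    (hM : ∀ t ∈ Set.Icc a b, ∀ i j, HasDerivAt (fun s => M s i j) ((A t * M t) i j) t)
    (hMunit : ∀ t ∈ Set.Icc a b, IsUnit (M t))
    (x : ℝ → Fin 2 → Quaternion ℝ)
    (hx : ∀ t ∈ Set.Icc a b, HasDerivAt x ((A t).mulVec (x t)) t) :
    (∀ t ∈ Set.Icc a b, x t = (M t).mulVec ((Ring.inverse (M t₀)).mulVec (x t₀))) ∧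
    ∃ q : Fin 2 → Quaternion ℝ, ∀ t ∈ Set.Icc a b, x t = (M t).mulVec q := by
  have hderiv : ∀ t ∈ Set.Icc a b,
      HasDerivAt (fun s => Ring.inverse (M s) *ᵥ x s) 0 t := fun t ht =>
    hasDerivAt_inverse_mulVec_eq_zero (hasDerivAt_matrix_iff.2 (hM t ht)) (hx t ht) (hMunit t ht)
  have hconst : ∀ t ∈ Set.Icc a b,
      Ring.inverse (M t) *ᵥ x t = Ring.inverse (M t₀) *ᵥ x t₀ := fun t ht =>
    eq_of_hasDerivAt_zero_of_mem_Icc hderiv ht ht₀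
  have hsol : ∀ t ∈ Set.Icc a b, x t = M t *ᵥ (Ring.inverse (M t₀) *ᵥ x t₀) := by
    intro t ht
    rw [← hconst t ht, mulVec_mulVec, Ring.mul_inverse_cancel _ (hMunit t ht), one_mulVec]
  exact ⟨hsol, Ring.inverse (M t₀) *ᵥ x t₀, hsol⟩

/-- If `M` is a fundamental matrix of `x' = A(t) x` on `I = [a,b]`, every solution `x`
satisfies `x(t) = M(t) (M(t₀)⁻¹ x(t₀))`; in particular every solution has the form
`x(t) = M(t) q` for a constant quaternionic vector `q`. -/
theorem solution_eq_fundamentalMatrix_mulVec (a b : ℝ)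
    (A : ℝ → Matrix (Fin 2) (Fin 2) (Quaternion ℝ))
    (hA : ContinuousOn A (Set.Icc a b))
    (t₀ : ℝ) (ht₀ : t₀ ∈ Set.Icc a b)
    (M : ℝ → Matrix (Fin 2) (Fin 2) (Quaternion ℝ))
    (hM : ∀ t ∈ Set.Icc a b, ∀ i j, HasDerivAt (fun s => M s i j) ((A t * M t) i j) t)
    (hMunit : ∀ t ∈ Set.Icc a b, IsUnit (M t))
    (x : ℝ → Fin 2 → Quaternion ℝ)
    (hx : ∀ t ∈ Set.Icc a b, HasDerivAt x ((A t).mulVec (x t)) t) :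
    (∀ t ∈ Set.Icc a b, x t = (M t).mulVec ((Ring.inverse (M t₀)).mulVec (x t₀))) ∧
    ∃ q : Fin 2 → Quaternion ℝ, ∀ t ∈ Set.Icc a b, x t = (M t).mulVec q :=
  solution_eq_fundamentalMatrix_mulVec_general a b A t₀ ht₀ M hM hMunit x hx
end

section
/- Let A ∈ M₂(ℍ), let λ₁, λ₂ ∈ ℍ, and let q₁, q₂ ∈ ℍ² be right eigenvectors, i.e. A⬝q_i = q_i λ_i for i = 1,2 (where q_i λ_i multiplies each component on the right), such that the 2×2 quaternion matrix with columns q₁ and q₂ is invertible. Then the matrix M(t) whose columns are q₁·exp(λ₁t) and q₂·exp(λ₂t) satisfies M'(t) = A·M(t) and M(t) is invertible for every t ∈ ℝ; i.e., M is a fundamental matrix of x' = Ax. -/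
open Matrix

/-- The matrix whose `j`-th column is the eigenvector `q_j` right-multiplied
componentwise by `exp (t λ_j)`. -/
noncomputable def eigMat (q₁ q₂ : Fin 2 → Quaternion ℝ) (l₁ l₂ : Quaternion ℝ) (t : ℝ) :
    Matrix (Fin 2) (Fin 2) (Quaternion ℝ) :=
  Matrix.of fun i j => (![q₁, q₂] j) i * NormedSpace.exp (t • ![l₁, l₂] j)

/-!
Writing `Q` for the matrix with columns `q₁, q₂` and `Λ = diag(λ₁, λ₂)`, the eigenvector
equations say `A Q = Q Λ`, and `M(t) = Q exp(tΛ)` with `exp(tΛ) = diag(exp(tλ₁), exp(tλ₂))`.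
Entrywise, `M'(t) = Q Λ exp(tΛ) = A Q exp(tΛ) = A M(t)`; and `M(t)` is invertible as the product
of the invertible `Q` with a diagonal matrix of exponentials, which are units.
-/

open NormedSpace

namespace Matrix

variable {m n : Type*}

theorem isUnit_diagonal_of_forall_isUnit [Fintype n] [DecidableEq n] {R : Type*} [Ring R]
    {d : n → R} (hd : ∀ i, IsUnit (d i)) : IsUnit (diagonal d) :=
  (Pi.isUnit_iff.mpr hd).map (diagonalRingHom n R)

theorem mul_eq_mul_diagonal_of_mulVec_col [Fintype n] [Fintype m] [DecidableEq m] {R : Type*}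
    [Ring R] {A : Matrix n n R} {Q : Matrix n m R} {l : m → R}
    (h : ∀ j, A *ᵥ (fun i => Q i j) = fun i => Q i j * l j) :
    A * Q = Q * diagonal l := by
  ext i j
  rw [mul_diagonal, ← congrFun (h j) i]
  rfl

theorem hasDerivAt_mul_diagonal_exp_smul [Fintype n] [DecidableEq n] {𝔸 : Type*} [NormedRing 𝔸]
    [NormedAlgebra ℝ 𝔸] [CompleteSpace 𝔸] (Q : Matrix m n 𝔸) (l : n → 𝔸) (t : ℝ) (i : m)
    (j : n) :
    HasDerivAt (fun s : ℝ => (Q * diagonal fun k => exp (s • l k)) i j)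
      ((Q * diagonal l * diagonal fun k => exp (t • l k)) i j) t := by
  simp only [mul_diagonal, mul_assoc]
  exact (hasDerivAt_exp_smul_const' (l j) t).const_mul (Q i j)

end Matrix

theorem eigMat_eq_mul_diagonal (q₁ q₂ : Fin 2 → Quaternion ℝ) (l₁ l₂ : Quaternion ℝ) (t : ℝ) :
    eigMat q₁ q₂ l₁ l₂ t
      = (Matrix.of fun i j => ![q₁, q₂] j i) * diagonal fun j => exp (t • ![l₁, l₂] j) := by
  ext i j : 1
  simp [eigMat, mul_diagonal]

/-- If `A q_i = q_i λ_i` for right eigenpairs `(λ₁, q₁)`, `(λ₂, q₂)` and the matrix with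
columns `q₁, q₂` is invertible, then the matrix with columns `q₁ exp(λ₁ t)`, `q₂ exp(λ₂ t)`
is a fundamental matrix of `x' = A x`: it satisfies `M'(t) = A M(t)` and is invertible
for every `t`. -/
theorem eigMat_fundamentalMatrix (A : Matrix (Fin 2) (Fin 2) (Quaternion ℝ))
    (l₁ l₂ : Quaternion ℝ) (q₁ q₂ : Fin 2 → Quaternion ℝ)
    (h₁ : A.mulVec q₁ = fun i => q₁ i * l₁)
    (h₂ : A.mulVec q₂ = fun i => q₂ i * l₂)
    (hunit : IsUnit (Matrix.of fun i j => ![q₁, q₂] j i)) :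
    (∀ t : ℝ, ∀ i j, HasDerivAt (fun s => eigMat q₁ q₂ l₁ l₂ s i j)
      ((A * eigMat q₁ q₂ l₁ l₂ t) i j) t) ∧
    (∀ t : ℝ, IsUnit (eigMat q₁ q₂ l₁ l₂ t)) := by
  have hAQ : A * (Matrix.of fun i j => ![q₁, q₂] j i)
      = (Matrix.of fun i j => ![q₁, q₂] j i) * diagonal ![l₁, l₂] :=
    mul_eq_mul_diagonal_of_mulVec_col fun j => by fin_cases j <;> assumption
  refine ⟨fun t i j => ?_, fun t => ?_⟩
  · simp only [eigMat_eq_mul_diagonal]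
    rw [← Matrix.mul_assoc, hAQ]
    exact hasDerivAt_mul_diagonal_exp_smul _ _ t i j
  · rw [eigMat_eq_mul_diagonal]
    exact hunit.mul <| isUnit_diagonal_of_forall_isUnit fun j =>
      isUnit_exp_of_mem_ball (𝕂 := ℝ) <|
        (expSeries_radius_eq_top ℝ (Quaternion ℝ)).symm ▸ edist_lt_top _ _
end

section
/- Let i, j, k ∈ ℍ be the quaternion imaginary units and consider the system x' = diag(i, j)·x on ℝ, which has solutions x₁(t) = (exp(ti), 0) and x₂(t) = (0, exp(tj)). Then x(t) = (exp(ti)·k, 0) is also a solution of this system on ℝ, yet there do not exist quaternions a, b that are complex numbers (i.e. whose j-components and k-components are zero) such that x(t) = x₁(t)a + x₂(t)b for all t ∈ ℝ. -/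
open Matrix

/-- The quaternion imaginary unit `i`. -/
def qI : Quaternion ℝ := ⟨0, 1, 0, 0⟩
/-- The quaternion imaginary unit `j`. -/
def qJ : Quaternion ℝ := ⟨0, 0, 1, 0⟩
/-- The quaternion imaginary unit `k`. -/
def qK : Quaternion ℝ := ⟨0, 0, 0, 1⟩

/-! Each component of the three curves solves a scalar equation `y' = d y`, and a diagonal
system is solved componentwise. The curve `(exp(t i) k, 0)` takes the value `(k, 0)` at `t = 0`,
while `x₁ a + x₂ b` takes the value `(a, b)` there; so `a = k`, which is not complex. -/

section DiagonalSystem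

variable {𝕜 R : Type*} [NontriviallyNormedField 𝕜] [NormedRing R] [NormedAlgebra 𝕜 R]

theorem hasDerivAt_diagonal_mulVec {ι : Type*} [Fintype ι] [DecidableEq ι] {d : ι → R}
    {x : 𝕜 → ι → R} {t : 𝕜} (hx : ∀ i, HasDerivAt (fun s => x s i) (d i * x t i) t) :
    HasDerivAt x (diagonal d *ᵥ x t) t := by
  rw [hasDerivAt_pi]
  simpa only [mulVec_diagonal] using hx

theorem hasDerivAt_vecCons_diagonal {f g : 𝕜 → R} {α β : R} {t : 𝕜}
    (hf : HasDerivAt f (α * f t) t) (hg : HasDerivAt g (β * g t) t) :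
    HasDerivAt (fun s => ![f s, g s]) (diagonal ![α, β] *ᵥ ![f t, g t]) t :=
  hasDerivAt_diagonal_mulVec fun i => by fin_cases i <;> assumption

theorem hasDerivAt_const_zero_eq_mul (β : R) (t : 𝕜) :
    HasDerivAt (fun _ => (0 : R)) (β * 0) t := by
  simpa only [mul_zero] using hasDerivAt_const t (0 : R)

end DiagonalSystem

theorem hasDerivAt_exp_smul_mul_const {𝕂 𝔸 : Type*} [RCLike 𝕂] [NormedRing 𝔸]
    [NormedAlgebra 𝕂 𝔸] [CompleteSpace 𝔸] (a c : 𝔸) (t : 𝕂) :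
    HasDerivAt (fun s : 𝕂 => NormedSpace.exp (s • a) * c)
      (a * (NormedSpace.exp (t • a) * c)) t := by
  simpa only [mul_assoc] using (hasDerivAt_exp_smul_const' a t).mul_const c

/-- For the system `x' = diag(i, j) x` with solutions `x₁(t) = (exp(t i), 0)` and
`x₂(t) = (0, exp(t j))`, the function `x(t) = (exp(t i) k, 0)` is also a solution, but it
cannot be written as `x₁ a + x₂ b` with complex constants `a, b` (quaternions whose `j`-
and `k`-components vanish). -/
theorem qde_solution_set_over_complex_not_complete :
    (∀ t : ℝ, HasDerivAt (fun s : ℝ => ![NormedSpace.exp (s • qI), 0])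
      ((Matrix.diagonal ![qI, qJ]).mulVec ![NormedSpace.exp (t • qI), 0]) t) ∧
    (∀ t : ℝ, HasDerivAt (fun s : ℝ => ![0, NormedSpace.exp (s • qJ)])
      ((Matrix.diagonal ![qI, qJ]).mulVec ![0, NormedSpace.exp (t • qJ)]) t) ∧
    (∀ t : ℝ, HasDerivAt (fun s : ℝ => ![NormedSpace.exp (s • qI) * qK, 0])
      ((Matrix.diagonal ![qI, qJ]).mulVec ![NormedSpace.exp (t • qI) * qK, 0]) t) ∧
    ¬∃ a b : Quaternion ℝ, (a.imJ = 0 ∧ a.imK = 0 ∧ b.imJ = 0 ∧ b.imK = 0) ∧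
      ∀ t : ℝ, (![NormedSpace.exp (t • qI) * qK, 0] : Fin 2 → Quaternion ℝ) =
        fun i => (![NormedSpace.exp (t • qI), 0] : Fin 2 → Quaternion ℝ) i * a +
          (![0, NormedSpace.exp (t • qJ)] : Fin 2 → Quaternion ℝ) i * b := by
  refine ⟨fun t => ?_, fun t => ?_, fun t => ?_, ?_⟩
  · exact hasDerivAt_vecCons_diagonal (hasDerivAt_exp_smul_const' qI t)
      (hasDerivAt_const_zero_eq_mul qJ t)
  · exact hasDerivAt_vecCons_diagonal (hasDerivAt_const_zero_eq_mul qI t)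
      (hasDerivAt_exp_smul_const' qJ t)
  · exact hasDerivAt_vecCons_diagonal (hasDerivAt_exp_smul_mul_const qI qK t)
      (hasDerivAt_const_zero_eq_mul qJ t)
  · rintro ⟨a, b, ⟨-, haK, -, -⟩, hx⟩
    have ha : qK = a := by
      simpa only [zero_smul, NormedSpace.exp_zero, cons_val_zero, one_mul, zero_mul,
        add_zero] using congrFun (hx 0) 0
    simp only [← ha, qK] at haK
    exact one_ne_zero haK
end
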